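/- Let M = M_L(D, B_0) be a strict gammoid and S ⊆ B_0. Then the contraction M / S is the strict gammoid M_L(D - S, B_0 \ S). -/

import Mathlib

open Set


/-- A finite directed path/walk or a ray, encoded by a vertex function and a length:
the number of edges, `⊤` for a ray. Only indices `≤ len` are meaningful. -/
structure DiWalk (V : Type*) where
  vtx : ℕ → V
  len : ℕ∞

namespace DiWalk

variable {V : Type*} (w : DiWalk V)

/-- The vertices of the walk. -/
def support : Set V := {v | ∃ i : ℕ, (i : ℕ∞) ≤ w.len ∧ w.vtx i = v}

/-- The directed edges of the walk. -/
def edges : Set (V × V) := {e | ∃ i : ℕ, (i : ℕ∞) + 1 ≤ w.len ∧ e = (w.vtx i, w.vtx (i + 1))}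

/-- The initial vertex. -/
def Ini : V := w.vtx 0

/-- The terminal vertex (meaningful for finite walks). -/
def Ter : V := w.vtx w.len.toNat

/-- `w` is a ray, i.e. one-way infinite. -/
def IsRay : Prop := w.len = ⊤

/-- `w` is a (finite) directed path or a directed ray in the digraph `D`: consecutive
vertices are joined by edges of `D` and no vertex is repeated. -/
def IsPathIn (D : V → V → Prop) : Prop :=
  (∀ i : ℕ, (i : ℕ∞) + 1 ≤ w.len → D (w.vtx i) (w.vtx (i + 1))) ∧
  (∀ i j : ℕ, (i : ℕ∞) ≤ w.len → (j : ℕ∞) ≤ w.len → w.vtx i = w.vtx j → i = j)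

end DiWalk

variable {V : Type*}

/-- The vertex set of a family of walks. -/
def VSet (Q : Set (DiWalk V)) : Set V := ⋃ q ∈ Q, q.support

/-- The edge set of a family of walks. -/
def ESet (Q : Set (DiWalk V)) : Set (V × V) := ⋃ q ∈ Q, q.edges

/-- The set of initial vertices of a family of walks. -/
def IniSet (Q : Set (DiWalk V)) : Set V := DiWalk.Ini '' Q

/-- The set of terminal vertices of the finite members of a family of walks. -/
def TerSet (Q : Set (DiWalk V)) : Set V := {v | ∃ q ∈ Q, ¬ q.IsRay ∧ q.Ter = v}

/-- The members of `Q` are pairwise vertex-disjoint. -/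
def PairwiseDisjointWalks (Q : Set (DiWalk V)) : Prop :=
  ∀ p ∈ Q, ∀ q ∈ Q, p ≠ q → Disjoint p.support q.support

/-- `Q` is a set of pairwise disjoint directed paths or rays in `D`. -/
def IsPathSystem (D : V → V → Prop) (Q : Set (DiWalk V)) : Prop :=
  (∀ q ∈ Q, q.IsPathIn D) ∧ PairwiseDisjointWalks Q

/-- A linkage in the dimaze `(D, B0)`: a set of pairwise disjoint finite directed paths
ending in `B0`. -/
def IsLinkage (D : V → V → Prop) (B0 : Set V) (Q : Set (DiWalk V)) : Prop :=
  IsPathSystem D Q ∧ ∀ q ∈ Q, ¬ q.IsRay ∧ q.Ter ∈ B0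

/-- `I` is linkable to `B0` in `(D, B0)`. -/
def Linkable (D : V → V → Prop) (B0 : Set V) (I : Set V) : Prop :=
  ∃ Q, IsLinkage D B0 Q ∧ IniSet Q = I

/-- `I` is linkable onto `B0`: some linkage from `I` has terminal vertex set exactly `B0`. -/
def LinkableOnto (D : V → V → Prop) (B0 : Set V) (I : Set V) : Prop :=
  ∃ Q, IsLinkage D B0 Q ∧ IniSet Q = I ∧ TerSet Q = B0

/-- `B0` is a set of sinks of `D`. -/
def IsDimaze (D : V → V → Prop) (B0 : Set V) : Prop := ∀ b ∈ B0, ∀ v, ¬ D b v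

/-- `v` is the centre of a linking fan: infinitely many non-trivial directed paths to `B0`
from `v`, pairwise meeting only in `v`. -/
def IsFanCentre (D : V → V → Prop) (B0 : Set V) (v : V) : Prop :=
  ∃ P : Set (DiWalk V), P.Infinite ∧
    (∀ p ∈ P, p.IsPathIn D ∧ ¬ p.IsRay ∧ 1 ≤ p.len ∧ p.Ini = v ∧ p.Ter ∈ B0) ∧
    (∀ p ∈ P, ∀ q ∈ P, p ≠ q → p.support ∩ q.support ⊆ {v})

/-- The ray `R` is the spine of an outgoing comb with teeth ending in `B0`: there are
infinitely many pairwise disjoint non-trivial paths from distinct vertices of `R` to `B0`,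
each meeting `R` exactly in its initial vertex. -/
def IsSpine (D : V → V → Prop) (B0 : Set V) (R : DiWalk V) : Prop :=
  R.IsPathIn D ∧ R.IsRay ∧
  ∃ P : Set (DiWalk V), P.Infinite ∧
    (∀ p ∈ P, p.IsPathIn D ∧ ¬ p.IsRay ∧ 1 ≤ p.len ∧ p.Ini ∈ R.support ∧ p.Ter ∈ B0 ∧
      p.support ∩ R.support = {p.Ini}) ∧
    PairwiseDisjointWalks P

/-- `(D, B0)` contains no subdivision of an outgoing comb. -/
def COFree (D : V → V → Prop) (B0 : Set V) : Prop := ¬ ∃ R, IsSpine D B0 R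

/-- `(D, B0)` contains no subdivision of a linking fan. -/
def FanFree (D : V → V → Prop) (B0 : Set V) : Prop := ¬ ∃ v, IsFanCentre D B0 v

/-- A topological path in `(D, B0)`. -/
def IsTopPath (D : V → V → Prop) (B0 : Set V) (w : DiWalk V) : Prop :=
  w.IsPathIn D ∧
    ((¬ w.IsRay ∧ w.Ter ∈ B0) ∨ (¬ w.IsRay ∧ IsFanCentre D B0 w.Ter) ∨ IsSpine D B0 w)

/-- `I` is topologically linkable in `(D, B0)`. -/
def TopLinkable (D : V → V → Prop) (B0 : Set V) (I : Set V) : Prop :=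
  ∃ Q : Set (DiWalk V), (∀ q ∈ Q, IsTopPath D B0 q) ∧ PairwiseDisjointWalks Q ∧ IniSet Q = I
/-- Deletion of `X` from the matroid `M`. -/
def Matroid.del {α : Type*} (M : Matroid α) (X : Set α) : Matroid α := M.restrict (M.E \ X)

/-- Contraction of `X` in the matroid `M`, defined via duality. -/
def Matroid.con {α : Type*} (M : Matroid α) (X : Set α) : Matroid α := (M.dual.del X).dual

/-- `C` is a circuit of `M`: a minimal dependent set. -/
def Matroid.IsCircuitOf {α : Type*} (M : Matroid α) (C : Set α) : Prop :=
  C ⊆ M.E ∧ ¬ M.Indep C ∧ ∀ C' ⊂ C, M.Indep C'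

/-- `e` is a coloop of `M`: an element of the ground set lying in no circuit. -/
def Matroid.IsColoopOf {α : Type*} (M : Matroid α) (e : α) : Prop :=
  e ∈ M.E ∧ ∀ C, M.IsCircuitOf C → e ∉ C

/-- `N` is a minor of `M`. -/
def Matroid.IsMinorOf {α : Type*} (N M : Matroid α) : Prop :=
  ∃ C D, C ⊆ M.E ∧ D ⊆ M.E ∧ Disjoint C D ∧ N = (M.con C).del D


/-
A path of `D` that starts at an exit is trivial, because exits are sinks. So in a linkage of
`I ∪ S` with `S ⊆ B₀` the vertices of `S` are used by trivial paths only, and the paths from `I`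
avoid `S`: they form a linkage of `I` in `D - S` onto `B₀ \ S`. Conversely, a linkage of `I`
in `D - S` together with the trivial paths at `S` links `I ∪ S` in `D`. Hence `I ∪ S` is
independent in `M` with `I ∩ S = ∅` exactly when `I` is linkable in `D - S`, and since `S`
is independent in `M` this is independence of `I` in `M / S`.
-/

variable {D D' : V → V → Prop} {B0 B0' S I : Set V} {Q Q' : Set (DiWalk V)} {q : DiWalk V}

/-- The digraph `D - S`. -/
def deleteVerts (D : V → V → Prop) (S : Set V) : V → V → Prop :=
  fun u v => D u v ∧ u ∉ S ∧ v ∉ S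

namespace DiWalk

lemma ini_mem_support (w : DiWalk V) : w.Ini ∈ w.support :=
  ⟨0, by simp, rfl⟩

lemma ter_mem_support (w : DiWalk V) (h : ¬ w.IsRay) : w.Ter ∈ w.support :=
  ⟨w.len.toNat, by rw [ENat.natCast_toNat h], rfl⟩

def nil (v : V) : DiWalk V := ⟨fun _ => v, 0⟩

@[simp] lemma nil_ini (v : V) : (nil v).Ini = v := rfl

lemma nil_not_isRay (v : V) : ¬ (nil v).IsRay := by
  simp [IsRay, nil]

@[simp] lemma support_nil (v : V) : (nil v).support = {v} := by
  ext u
  simp [support, nil, eq_comm]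

lemma isPathIn_nil (D : V → V → Prop) (v : V) : (nil v).IsPathIn D := by
  refine ⟨fun i hi => ?_, fun i j hi hj _ => ?_⟩
  · simp [nil] at hi
  · simp_all [nil]

lemma IsPathIn.mono (h : ∀ u v, D u v → D' u v) (hq : q.IsPathIn D) : q.IsPathIn D' :=
  ⟨fun i hi => h _ _ (hq.1 i hi), hq.2⟩

lemma IsPathIn.support_eq_singleton_of_ini_mem (hDim : IsDimaze D B0) (hq : q.IsPathIn D)
    (h : q.Ini ∈ B0) : q.support = {q.Ini} := by
  have hlen : q.len = 0 := by
    by_contra hne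
    exact hDim _ h _ (hq.1 0 (by simpa [Order.one_le_iff_pos, pos_iff_ne_zero] using hne))
  ext v
  constructor
  · rintro ⟨i, hi, rfl⟩
    rw [hlen, Nat.cast_nonpos] at hi
    rw [hi]
    rfl
  · rintro rfl
    exact q.ini_mem_support

lemma IsPathIn.disjoint_support_of_deleteVerts (hq : q.IsPathIn (deleteVerts D S))
    (hray : ¬ q.IsRay) (hter : q.Ter ∉ S) : Disjoint q.support S := by
  obtain ⟨n, hn⟩ := ENat.ne_top_iff_exists.mp hray
  rw [disjoint_left]
  rintro _ ⟨i, hi, rfl⟩ hvS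
  -- every vertex of a finite path is its last vertex or the tail of one of its edges
  by_cases hedge : (i : ℕ∞) + 1 ≤ q.len
  · exact (hq.1 i hedge).2.1 hvS
  · rw [← hn] at hi hedge
    have hin : i = n := by norm_cast at hi hedge; omega
    exact hter (by rwa [Ter, ← hn, ENat.toNat_natCast, ← hin])

end DiWalk

open DiWalk

lemma iniSet_subset_vSet (Q : Set (DiWalk V)) : IniSet Q ⊆ VSet Q := by
  rintro _ ⟨q, hq, rfl⟩
  exact mem_biUnion hq q.ini_mem_support

lemma iniSet_union (Q Q' : Set (DiWalk V)) : IniSet (Q ∪ Q') = IniSet Q ∪ IniSet Q' :=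
  image_union _ _ _

lemma iniSet_nil_image (S : Set V) : IniSet (nil '' S) = S := by
  simp [IniSet, image_image]

lemma vSet_nil_image (S : Set V) : VSet (nil '' S) = S := by
  simp [VSet]

lemma isLinkage_nil_image (hS : S ⊆ B0) : IsLinkage D B0 (nil '' S) := by
  refine ⟨⟨?_, ?_⟩, ?_⟩
  · rintro _ ⟨v, -, rfl⟩
    exact isPathIn_nil D v
  · rintro _ ⟨u, -, rfl⟩ _ ⟨v, -, rfl⟩ hne
    rw [support_nil, support_nil, disjoint_singleton]
    exact fun h => hne (h ▸ rfl)
  · rintro _ ⟨v, hv, rfl⟩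
    exact ⟨nil_not_isRay v, hS hv⟩

lemma linkable_of_subset (hS : S ⊆ B0) : Linkable D B0 S :=
  ⟨_, isLinkage_nil_image hS, iniSet_nil_image S⟩

namespace IsLinkage

lemma subset (hQ : IsLinkage D B0 Q) (h : Q' ⊆ Q) : IsLinkage D B0 Q' :=
  ⟨⟨fun q hq => hQ.1.1 q (h hq), fun p hp q hq => hQ.1.2 p (h hp) q (h hq)⟩,
    fun q hq => hQ.2 q (h hq)⟩

lemma mono (hD : ∀ u v, D u v → D' u v) (hB : B0 ⊆ B0') (hQ : IsLinkage D B0 Q) :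
    IsLinkage D' B0' Q :=
  ⟨⟨fun q hq => (hQ.1.1 q hq).mono hD, hQ.1.2⟩,
    fun q hq => ⟨(hQ.2 q hq).1, hB (hQ.2 q hq).2⟩⟩

lemma union (hQ : IsLinkage D B0 Q) (hQ' : IsLinkage D B0 Q')
    (h : Disjoint (VSet Q) (VSet Q')) : IsLinkage D B0 (Q ∪ Q') := by
  refine ⟨⟨?_, ?_⟩, ?_⟩
  · rintro q (hq | hq)
    exacts [hQ.1.1 q hq, hQ'.1.1 q hq]
  · rintro p (hp | hp) q (hq | hq) hne
    · exact hQ.1.2 p hp q hq hne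
    · exact h.mono (subset_biUnion_of_mem hp) (subset_biUnion_of_mem hq)
    · exact (h.mono (subset_biUnion_of_mem hq) (subset_biUnion_of_mem hp)).symm
    · exact hQ'.1.2 p hp q hq hne
  · rintro q (hq | hq)
    exacts [hQ.2 q hq, hQ'.2 q hq]

end IsLinkage

lemma isLinkage_deleteVerts_iff :
    IsLinkage (deleteVerts D S) (B0 \ S) Q ↔ IsLinkage D B0 Q ∧ Disjoint (VSet Q) S := by
  refine ⟨fun hQ => ⟨hQ.mono (fun _ _ h => h.1) sdiff_subset, ?_⟩, fun ⟨hQ, hQS⟩ => ?_⟩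
  · refine disjoint_iUnion₂_left.2 fun q hq => ?_
    exact (hQ.1.1 q hq).disjoint_support_of_deleteVerts (hQ.2 q hq).1 (hQ.2 q hq).2.2
  · have havoid : ∀ q ∈ Q, Disjoint q.support S := disjoint_iUnion₂_left.1 hQS
    refine ⟨⟨fun q hq => ⟨fun i hi => ⟨(hQ.1.1 q hq).1 i hi, ?_, ?_⟩, (hQ.1.1 q hq).2⟩,
      hQ.1.2⟩, fun q hq => ⟨(hQ.2 q hq).1, (hQ.2 q hq).2, ?_⟩⟩
    · exact disjoint_left.1 (havoid q hq) ⟨i, le_self_add.trans hi, rfl⟩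
    · exact disjoint_left.1 (havoid q hq) ⟨i + 1, by exact_mod_cast hi, rfl⟩
    · exact disjoint_left.1 (havoid q hq) (q.ter_mem_support (hQ.2 q hq).1)

lemma linkable_union_of_linkable_deleteVerts (hS : S ⊆ B0)
    (hI : Linkable (deleteVerts D S) (B0 \ S) I) :
    Disjoint I S ∧ Linkable D B0 (I ∪ S) := by
  obtain ⟨Q, hQ, rfl⟩ := hI
  obtain ⟨hQD, hQS⟩ := isLinkage_deleteVerts_iff.1 hQ
  refine ⟨hQS.mono_left (iniSet_subset_vSet Q), Q ∪ nil '' S, ?_, ?_⟩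
  · exact hQD.union (isLinkage_nil_image hS) (by rwa [vSet_nil_image])
  · rw [iniSet_union, iniSet_nil_image]

lemma linkable_deleteVerts_of_linkable_union (hDim : IsDimaze D B0) (hS : S ⊆ B0)
    (hIS : Disjoint I S) (hI : Linkable D B0 (I ∪ S)) :
    Linkable (deleteVerts D S) (B0 \ S) I := by
  obtain ⟨Q, hQ, hini⟩ := hI
  have hstart : ∀ v ∈ I ∪ S, ∃ p ∈ Q, p.Ini = v := fun v hv => by
    rw [← hini] at hv
    exact hv
  have hfrom_I_avoid_S : ∀ q ∈ {q ∈ Q | q.Ini ∈ I}, Disjoint q.support S := by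
    rintro q ⟨hq, hqI⟩
    refine disjoint_right.2 fun v hv hvq => ?_
    obtain ⟨p, hp, rfl⟩ := hstart v (Or.inr hv)
    have hpq : p ≠ q := fun h => disjoint_left.1 hIS (h ▸ hqI) hv
    have hp_trivial := (hQ.1.1 p hp).support_eq_singleton_of_ini_mem hDim (hS hv)
    exact disjoint_left.1 (hQ.1.2 p hp q hq hpq) (hp_trivial ▸ rfl) hvq
  refine ⟨{q ∈ Q | q.Ini ∈ I}, ?_, ?_⟩
  · exact isLinkage_deleteVerts_iff.2
      ⟨hQ.subset (sep_subset _ _), disjoint_iUnion₂_left.2 hfrom_I_avoid_S⟩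
  · ext v
    refine ⟨fun ⟨q, ⟨_, hqI⟩, hqv⟩ => hqv ▸ hqI, fun hv => ?_⟩
    obtain ⟨q, hq, rfl⟩ := hstart v (Or.inl hv)
    exact ⟨q, ⟨hq, hv⟩, rfl⟩

theorem linkable_deleteVerts_iff (hDim : IsDimaze D B0) (hS : S ⊆ B0) :
    Linkable (deleteVerts D S) (B0 \ S) I ↔ Disjoint I S ∧ Linkable D B0 (I ∪ S) :=
  ⟨linkable_union_of_linkable_deleteVerts hS,
    fun ⟨hIS, hI⟩ => linkable_deleteVerts_of_linkable_union hDim hS hIS hI⟩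

lemma Matroid.con_eq_contract {α : Type*} (M : Matroid α) (X : Set α) : M.con X = M.contract X :=
  rfl

theorem contract_subset_of_exits_general {V : Type*} (D : V → V → Prop) (B0 : Set V)
    (hDim : IsDimaze D B0) (M : Matroid V)
    (hInd : ∀ I, M.Indep I ↔ Linkable D B0 I) (S : Set V) (hS : S ⊆ B0) :
    ∀ I, (M.con S).Indep I ↔
      Linkable (fun u v => D u v ∧ u ∉ S ∧ v ∉ S) (B0 \ S) I := by
  intro I
  have hS_indep : M.Indep S := (hInd S).2 (linkable_of_subset hS)
  rw [Matroid.con_eq_contract, hS_indep.contract_indep_iff, hInd]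
  exact (linkable_deleteVerts_iff hDim hS).symm

theorem contract_subset_of_exits {V : Type*} (D : V → V → Prop) (B0 : Set V)
    (hDim : IsDimaze D B0) (M : Matroid V) (hE : M.E = Set.univ)
    (hInd : ∀ I, M.Indep I ↔ Linkable D B0 I) (S : Set V) (hS : S ⊆ B0) :
    ∀ I, (M.con S).Indep I ↔
      Linkable (fun u v => D u v ∧ u ∉ S ∧ v ∉ S) (B0 \ S) I :=
  contract_subset_of_exits_general D B0 hDim M hInd S hS
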